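/- arXiv:1611.02194 — 2 statements merged into one kernel-verified Lean document; each statement's English description precedes it below -/
import Mathlib

section
/- If ξ = G(ξ), then the function ρ_ξ(x,u) = (1/L) F_ξ(u), with F_ξ the Gaussian density of mean ξ and variance σ²/2, satisfies −u ∂ρ/∂x − ∂/∂u[(G(∫∫ u' φ(‖x'‖) ρ(x−x', u') du' dx') − u) ρ] + (σ²/2) ∂²ρ/∂u² = 0. -/
open Real MeasureTheory

theorem stationary_state_nonlinear_fokker_planck
    (L σ : ℝ) (hL : 0 < L) (hσ : 0 < σ)
    (φ : ℝ → ℝ) (hφ : ∀ x, 0 ≤ φ x)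
    (hφnorm : (1 / L) * ∫ x in (0:ℝ)..L, φ (min |x| (L - |x|)) = 1)
    (G : ℝ → ℝ) (hG : ContDiff ℝ (⊤ : ℕ∞) G)
    (ξ : ℝ) (hξ : ξ = G ξ)
    (F : ℝ → ℝ) (hF : ∀ u, F u = (Real.pi * σ ^ 2) ^ (-(1:ℝ)/2) * Real.exp (-(u - ξ) ^ 2 / σ ^ 2))
    (ρ : ℝ → ℝ → ℝ) (hρ : ∀ x u, ρ x u = F u / L) :
    ∀ x u : ℝ,
      -u * deriv (fun x' => ρ x' u) x
        - deriv (fun v =>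
            (G (∫ x' in (0:ℝ)..L, ∫ u' : ℝ,
                u' * φ (min |x'| (L - |x'|)) * ρ (x - x') u') - v) * ρ x v) u
        + σ ^ 2 / 2 * deriv (deriv (fun v => ρ x v)) u = 0 := by
  intro x u
  have hσ2 : (0:ℝ) < σ ^ 2 := by positivity
  have hσ2' : (σ:ℝ) ^ 2 ≠ 0 := ne_of_gt hσ2
  set K : ℝ := (Real.pi * σ ^ 2) ^ (-(1:ℝ)/2) with hKdef
  set e : ℝ → ℝ := fun v => Real.exp (-(v - ξ) ^ 2 / σ ^ 2) with hedef
  -- derivative of e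
  have he : ∀ v, HasDerivAt e (-2 * (v - ξ) / σ ^ 2 * e v) v := by
    intro v
    have h1 : HasDerivAt (fun v : ℝ => -(v - ξ) ^ 2 / σ ^ 2) (-2 * (v - ξ) / σ ^ 2) v := by
      have : HasDerivAt (fun v : ℝ => (v - ξ) ^ 2) (2 * (v - ξ)) v := by
        simpa using ((hasDerivAt_id v).sub_const ξ).fun_pow 2
      simpa [neg_div] using this.neg.div_const (σ ^ 2)
    simpa [hedef, mul_comm] using h1.exp
  -- step 1 : x-derivative is 0
  have h1 : deriv (fun x' => ρ x' u) x = 0 := by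
    have : (fun x' => ρ x' u) = fun _ => F u / L := funext fun x' => hρ x' u
    rw [this, deriv_const]
  -- Gaussian mean
  have hb : (0:ℝ) < 1 / σ ^ 2 := by positivity
  have hmean : (∫ u' : ℝ, u' * F u') = ξ := by
    have hFshift : ∀ v : ℝ, (v + ξ) * F (v + ξ)
        = K * (v * Real.exp (-(1/σ^2) * v ^ 2)) + (K * ξ) * Real.exp (-(1/σ^2) * v ^ 2) := by
      intro v
      have harg : -(v + ξ - ξ) ^ 2 / σ ^ 2 = -(1/σ^2) * v ^ 2 := by
        field_simp
        ring
      rw [hF, harg]; ring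
    have hodd : (∫ v : ℝ, v * Real.exp (-(1/σ^2) * v ^ 2)) = 0 := by
      have h2 : (∫ v : ℝ, (-v) * Real.exp (-(1/σ^2) * (-v) ^ 2))
          = ∫ v : ℝ, v * Real.exp (-(1/σ^2) * v ^ 2) :=
        integral_neg_eq_self (fun v : ℝ => v * Real.exp (-(1/σ^2) * v ^ 2)) volume
      have h3 : (∫ v : ℝ, (-v) * Real.exp (-(1/σ^2) * (-v) ^ 2))
          = - ∫ v : ℝ, v * Real.exp (-(1/σ^2) * v ^ 2) := by
        simp [neg_mul, integral_neg, neg_sq]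
      linarith [h2, h3.symm.trans h2]
    calc (∫ u' : ℝ, u' * F u') = ∫ v : ℝ, (v + ξ) * F (v + ξ) :=
          (integral_add_right_eq_self (fun w : ℝ => w * F w) ξ).symm
      _ = ∫ v : ℝ, (K * (v * Real.exp (-(1/σ^2) * v ^ 2))
            + (K * ξ) * Real.exp (-(1/σ^2) * v ^ 2)) := by simp_rw [hFshift]
      _ = K * (∫ v : ℝ, v * Real.exp (-(1/σ^2) * v ^ 2))
            + (K * ξ) * ∫ v : ℝ, Real.exp (-(1/σ^2) * v ^ 2) := by
          rw [integral_add ((integrable_mul_exp_neg_mul_sq hb).const_mul K)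
            ((integrable_exp_neg_mul_sq hb).const_mul (K * ξ)),
            integral_const_mul, integral_const_mul]
      _ = (K * ξ) * Real.sqrt (Real.pi / (1/σ^2)) := by
          rw [hodd, integral_gaussian]; ring
      _ = ξ := by
          have hπ : Real.pi / (1/σ^2) = Real.pi * σ ^ 2 := by field_simp
          have hK1 : K * Real.sqrt (Real.pi * σ ^ 2) = 1 := by
            rw [hKdef, Real.sqrt_eq_rpow,
              ← Real.rpow_add (by positivity : (0:ℝ) < Real.pi * σ ^ 2)]
            norm_num
          rw [hπ, show K * ξ * √(Real.pi * σ ^ 2) = K * √(Real.pi * σ ^ 2) * ξ from by ring, hK1, one_mul]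
  -- the nonlinear integral equals ξ
  have hinner : ∀ x' : ℝ, (∫ u' : ℝ, u' * φ (min |x'| (L - |x'|)) * ρ (x - x') u')
      = φ (min |x'| (L - |x'|)) * (ξ / L) := by
    intro x'
    have hfun : (fun u' : ℝ => u' * φ (min |x'| (L - |x'|)) * ρ (x - x') u')
        = fun u' : ℝ => (φ (min |x'| (L - |x'|)) / L) * (u' * F u') := by
      funext u'; rw [hρ]; ring
    rw [hfun, integral_const_mul, hmean]; ring
  have hI : (∫ x' in (0:ℝ)..L, ∫ u' : ℝ,
      u' * φ (min |x'| (L - |x'|)) * ρ (x - x') u') = ξ := by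
    have hIφ : (∫ x in (0:ℝ)..L, φ (min |x| (L - |x|))) = L := by
      field_simp at hφnorm; linarith
    calc (∫ x' in (0:ℝ)..L, ∫ u' : ℝ, u' * φ (min |x'| (L - |x'|)) * ρ (x - x') u')
        = ∫ x' in (0:ℝ)..L, φ (min |x'| (L - |x'|)) * (ξ / L) := by
          apply intervalIntegral.integral_congr; intro x' _; exact hinner x'
      _ = (∫ x' in (0:ℝ)..L, φ (min |x'| (L - |x'|))) * (ξ / L) :=
          intervalIntegral.integral_mul_const _ _
      _ = ξ := by rw [hIφ]; field_simp
  -- drift term derivative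
  have hmid : (fun v => (G (∫ x' in (0:ℝ)..L, ∫ u' : ℝ,
      u' * φ (min |x'| (L - |x'|)) * ρ (x - x') u') - v) * ρ x v)
      = fun v => (ξ - v) * (K * e v / L) := by
    funext v; rw [hI, ← hξ, hρ, hF]
  have hD1 : HasDerivAt (fun v => (ξ - v) * (K * e v / L))
      ((-1) * (K * e u / L) + (ξ - u) * (K * (-2 * (u - ξ) / σ ^ 2 * e u) / L)) u := by
    have := ((hasDerivAt_id u).const_sub ξ).fun_mul (((he u).const_mul K).div_const L)
    simpa using this
  -- second derivative term
  have hρx : (fun v => ρ x v) = fun v => K * e v / L :=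
    funext fun v => by rw [hρ, hF]
  have hd1 : deriv (fun v => K * e v / L) = fun v => K * (-2 * (v - ξ) / σ ^ 2 * e v) / L :=
    funext fun v => (((he v).const_mul K).div_const L).deriv
  have hd2 : HasDerivAt (fun v => K * (-2 * (v - ξ) / σ ^ 2 * e v) / L)
      (K * ((-2 / σ ^ 2) * e u + (-2 * (u - ξ) / σ ^ 2) * (-2 * (u - ξ) / σ ^ 2 * e u)) / L) u := by
    have hlin : HasDerivAt (fun v : ℝ => -2 * (v - ξ) / σ ^ 2) (-2 / σ ^ 2) u := by
      simpa using (((hasDerivAt_id u).sub_const ξ).const_mul (-2)).div_const (σ ^ 2)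
    exact ((hlin.mul (he u)).const_mul K).div_const L
  rw [h1, hmid, hD1.deriv, hρx, hd1, hd2.deriv]
  field_simp
  ring
end

section
/- Let k < 0 be an integer, σ > 0, ξ ∈ ℝ, L > 0. If a bounded continuous function f : ℝ → ℂ satisfies the ODE −(2πk/L + η) f'(η) = (iξη + σ²η²/2) f(η) on (−∞, −2πk/L), then f ≡ 0 on (−∞, −2πk/L). -/
open Real Complex Set Filter Topology

/-!
Put `a = -2πk/L > 0`. On `(-∞, a)` the equation reads `(a - η) f' = (iξη + σ²η²/2) f`, so
`f = C · exp G` for a primitive `G` of `(iξη + σ²η²/2) / (a - η)`. The real part of `G` contains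
the term `-(σ²a²/2) log (a - η)`, which tends to `+∞` as `η → a⁻`; hence `f` is unbounded
unless `C = 0`.
-/

theorem IsOpen.exists_eq_mul_exp_of_hasDerivAt {s : Set ℝ} (hs : IsOpen s)
    (hs' : IsPreconnected s) {f g G : ℝ → ℂ} (hf : ∀ y ∈ s, HasDerivAt f (g y * f y) y)
    (hG : ∀ y ∈ s, HasDerivAt G (g y) y) : ∃ C, ∀ y ∈ s, f y = C * cexp (G y) := by
  have hH : ∀ y ∈ s, HasDerivAt (fun y ↦ f y * cexp (-G y)) 0 y := fun y hy ↦
    ((hf y hy).mul (hG y hy).fun_neg.cexp).congr_deriv (by ring)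
  obtain ⟨C, hC⟩ := hs.exists_is_const_of_deriv_eq_zero hs'
    (fun y hy ↦ (hH y hy).differentiableAt.differentiableWithinAt)
    (fun y hy ↦ (hH y hy).deriv)
  refine ⟨C, fun y hy ↦ ?_⟩
  rw [← hC y hy, mul_assoc, ← Complex.exp_add, neg_add_cancel, Complex.exp_zero, mul_one]

theorem eq_zero_of_norm_mul_exp_le {α : Type*} {l : Filter α} [l.NeBot] {G : α → ℂ}
    (hG : Tendsto (fun x ↦ (G x).re) l atTop) {C : ℂ} {M : ℝ}
    (hbdd : ∀ᶠ x in l, ‖C * cexp (G x)‖ ≤ M) : C = 0 := by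
  by_contra hC
  have hnorm : Tendsto (fun x ↦ ‖C * cexp (G x)‖) l atTop := by
    simpa only [norm_mul, Complex.norm_exp, Function.comp_def] using
      (Real.tendsto_exp_atTop.comp hG).const_mul_atTop (norm_pos_iff.mpr hC)
  obtain ⟨x, hxM, hx⟩ := ((hnorm.eventually_gt_atTop M).and hbdd).exists
  exact hxM.not_ge hx

section Primitives

variable {a y : ℝ}

noncomputable def primitiveIdDivSub (a y : ℝ) : ℝ := -y - a * Real.log (a - y)

noncomputable def primitiveSqDivSub (a y : ℝ) : ℝ :=
  -(y ^ 2 / 2) - a * y - a ^ 2 * Real.log (a - y)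

theorem hasDerivAt_log_sub (hy : y < a) :
    HasDerivAt (fun y ↦ Real.log (a - y)) (-1 / (a - y)) y := by
  simpa using ((hasDerivAt_id y).const_sub a).log (sub_pos.mpr hy).ne'

theorem hasDerivAt_primitiveIdDivSub (hy : y < a) :
    HasDerivAt (primitiveIdDivSub a) (y / (a - y)) y := by
  refine ((hasDerivAt_id' y).fun_neg.fun_sub
    ((hasDerivAt_log_sub hy).const_mul a)).congr_deriv ?_
  field_simp [(sub_pos.mpr hy).ne']
  ring

theorem hasDerivAt_primitiveSqDivSub (hy : y < a) :
    HasDerivAt (primitiveSqDivSub a) (y ^ 2 / (a - y)) y := by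
  refine ((((hasDerivAt_pow 2 y).div_const 2).fun_neg.fun_sub
    ((hasDerivAt_id' y).const_mul a)).fun_sub
    ((hasDerivAt_log_sub hy).const_mul (a ^ 2))).congr_deriv ?_
  field_simp [(sub_pos.mpr hy).ne']
  ring

theorem tendsto_primitiveSqDivSub (ha : a ≠ 0) :
    Tendsto (primitiveSqDivSub a) (𝓝[<] a) atTop := by
  have hsub : Tendsto (fun y ↦ a - y) (𝓝[<] a) (𝓝[>] 0) := by
    refine tendsto_nhdsWithin_of_tendsto_nhds_of_eventually_within _ ?_ ?_
    · have : Tendsto (fun y ↦ a - y) (𝓝 a) (𝓝 (a - a)) := tendsto_const_nhds.sub tendsto_id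
      simpa using this.mono_left nhdsWithin_le_nhds
    · filter_upwards [self_mem_nhdsWithin] with y (hy : y < a) using sub_pos.mpr hy
  have hlog : Tendsto (fun y ↦ -(a ^ 2 * Real.log (a - y))) (𝓝[<] a) atTop :=
    tendsto_neg_atBot_atTop.comp
      ((Real.tendsto_log_nhdsGT_zero.comp hsub).const_mul_atBot (by positivity))
  have hpoly : Tendsto (fun y : ℝ ↦ -(y ^ 2 / 2) - a * y) (𝓝[<] a) (𝓝 (-(a ^ 2 / 2) - a * a)) :=
    (by fun_prop : Continuous fun y : ℝ ↦ -(y ^ 2 / 2) - a * y).continuousAt.tendsto.mono_left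
      nhdsWithin_le_nhds
  refine (hpoly.add_atTop hlog).congr fun y ↦ ?_
  simp only [primitiveSqDivSub]
  ring

noncomputable def odePrimitive (a σ ξ y : ℝ) : ℂ :=
  (σ ^ 2 / 2 * primitiveSqDivSub a y : ℝ) + (ξ * primitiveIdDivSub a y : ℝ) * I

theorem hasDerivAt_odePrimitive (σ ξ : ℝ) (hy : y < a) :
    HasDerivAt (odePrimitive a σ ξ) ((I * ξ * y + σ ^ 2 * y ^ 2 / 2) / (a - y)) y := by
  refine ((((hasDerivAt_primitiveSqDivSub hy).const_mul (σ ^ 2 / 2)).ofReal_comp).add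
    (((hasDerivAt_primitiveIdDivSub hy).const_mul ξ).ofReal_comp.mul_const I)).congr_deriv ?_
  have : (a : ℂ) - y ≠ 0 := by exact_mod_cast (sub_pos.mpr hy).ne'
  push_cast
  field_simp
  ring

theorem tendsto_re_odePrimitive (ha : a ≠ 0) {σ : ℝ} (hσ : σ ≠ 0) (ξ : ℝ) :
    Tendsto (fun y ↦ (odePrimitive a σ ξ y).re) (𝓝[<] a) atTop := by
  simpa only [odePrimitive, add_re, ofReal_re, mul_I_re, ofReal_im, neg_zero, add_zero] using
    (tendsto_primitiveSqDivSub ha).const_mul_atTop (by positivity : (0 : ℝ) < σ ^ 2 / 2)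

end Primitives

theorem bounded_solution_vanishes_general
    (k : ℤ) (hk : k < 0) (σ ξ L : ℝ) (hσ : 0 < σ) (hL : 0 < L)
    (f : ℝ → ℂ) (hbdd : ∃ M : ℝ, ∀ η : ℝ, ‖f η‖ ≤ M)
    (hdiff : ∀ η ∈ Set.Iio (-(2 * Real.pi * (k : ℝ) / L)), DifferentiableAt ℝ f η)
    (hode : ∀ η ∈ Set.Iio (-(2 * Real.pi * (k : ℝ) / L)),
      -(((2 * Real.pi * (k : ℝ) / L : ℝ) : ℂ) + (η : ℂ)) * deriv f η
        = (Complex.I * (ξ : ℂ) * (η : ℂ) + (σ : ℂ) ^ 2 * (η : ℂ) ^ 2 / 2) * f η) :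
    ∀ η ∈ Set.Iio (-(2 * Real.pi * (k : ℝ) / L)), f η = 0 := by
  set a := -(2 * Real.pi * (k : ℝ) / L)
  have ha : 0 < a := neg_pos.mpr (div_neg_of_neg_of_pos
    (mul_neg_of_pos_of_neg (by positivity) (by exact_mod_cast hk)) hL)
  have hf : ∀ y ∈ Iio a, HasDerivAt f ((I * ξ * y + σ ^ 2 * y ^ 2 / 2) / (a - y) * f y) y := by
    intro y hy
    have hy' : (a : ℂ) - y ≠ 0 := by exact_mod_cast (sub_pos.mpr hy).ne'
    refine (hdiff y hy).hasDerivAt.congr_deriv ?_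
    rw [div_mul_eq_mul_div, eq_div_iff hy', ← hode y hy]
    push_cast [a]
    ring
  obtain ⟨C, hC⟩ := isOpen_Iio.exists_eq_mul_exp_of_hasDerivAt isPreconnected_Iio hf
    (fun y hy ↦ hasDerivAt_odePrimitive σ ξ hy)
  obtain ⟨M, hM⟩ := hbdd
  have hC0 : C = 0 := eq_zero_of_norm_mul_exp_le (tendsto_re_odePrimitive ha.ne' hσ.ne' ξ)
    (eventually_nhdsWithin_of_forall fun y hy ↦ hC y hy ▸ hM y)
  intro η hη
  rw [hC η hη, hC0, zero_mul]

theorem bounded_solution_vanishes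
    (k : ℤ) (hk : k < 0) (σ ξ L : ℝ) (hσ : 0 < σ) (hL : 0 < L)
    (f : ℝ → ℂ) (hbdd : ∃ M : ℝ, ∀ η : ℝ, ‖f η‖ ≤ M)
    (hcont : Continuous f)
    (hdiff : ∀ η ∈ Set.Iio (-(2 * Real.pi * (k : ℝ) / L)), DifferentiableAt ℝ f η)
    (hode : ∀ η ∈ Set.Iio (-(2 * Real.pi * (k : ℝ) / L)),
      -(((2 * Real.pi * (k : ℝ) / L : ℝ) : ℂ) + (η : ℂ)) * deriv f η
        = (Complex.I * (ξ : ℂ) * (η : ℂ) + (σ : ℂ) ^ 2 * (η : ℂ) ^ 2 / 2) * f η) :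
    ∀ η ∈ Set.Iio (-(2 * Real.pi * (k : ℝ) / L)), f η = 0 :=
  bounded_solution_vanishes_general k hk σ ξ L hσ hL f hbdd hdiff hode
end
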